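/- Janssen representation: for every subgroup Λ of ZMod N × ZMod N and all g, h ∈ ℂ^N, the Gabor frame-type operator satisfies S_{g,h,Λ} = (|Λ|/N) · ∑_{μ ∈ Λ°} ⟨g, π(μ)h⟩ · π(μ), where |Λ| is the cardinality of Λ; in particular the Gabor frame operator satisfies S_{g,Λ} = (|Λ|/N) · ∑_{μ ∈ Λ°} ⟨g, π(μ)g⟩ · π(μ). -/
import Mathlib


open Complex Finset

/-- The time-frequency shift `π(k,r)` on `ℂ^N ≅ (ZMod N → ℂ)`:
`(π(k,r)f)(j) = e^{2πi·rj/N} · f(j−k)`. -/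
noncomputable def tfShift (N : ℕ) (k r : ZMod N) : (ZMod N → ℂ) →ₗ[ℂ] (ZMod N → ℂ) where
  toFun f := fun j => Complex.exp (2 * Real.pi * Complex.I * (((r * j).val : ℂ) / (N : ℂ))) * f (j - k)
  map_add' f g := by
    funext j
    simp [mul_add]
  map_smul' c f := by
    funext j
    simp [Pi.smul_apply, smul_eq_mul]
    ring

/-- The inner product `⟨f,g⟩ = ∑ⱼ f(j)·conj(g(j))`, linear in the first argument. -/
noncomputable def inn {N : ℕ} [NeZero N] (f g : ZMod N → ℂ) : ℂ :=
  ∑ j, f j * starRingEnd ℂ (g j)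

/-- The short-time Fourier transform `V_g f(k,r) = ⟨f, π(k,r)g⟩`. -/
noncomputable def stft {N : ℕ} [NeZero N] (g f : ZMod N → ℂ) (k r : ZMod N) : ℂ :=
  inn f (tfShift N k r g)

/-- The adjoint subgroup `Λ° = {(k,r) : l·r − k·s = 0 in ZMod N for all (l,s) ∈ Λ}`,
as a set. -/
def adjSet {N : ℕ} (Λ : AddSubgroup (ZMod N × ZMod N)) : Set (ZMod N × ZMod N) :=
  {p | ∀ q ∈ Λ, q.1 * p.2 - p.1 * q.2 = 0}

/-- The underlying finite set of a subgroup `Λ` of `ZMod N × ZMod N`. -/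
noncomputable def subFinset {N : ℕ} [NeZero N] (Λ : AddSubgroup (ZMod N × ZMod N)) :
    Finset (ZMod N × ZMod N) :=
  Set.Finite.toFinset (Set.toFinite (Λ : Set (ZMod N × ZMod N)))

/-- The underlying finite set of the adjoint subgroup `Λ°`. -/
noncomputable def adjFinset {N : ℕ} [NeZero N] (Λ : AddSubgroup (ZMod N × ZMod N)) :
    Finset (ZMod N × ZMod N) :=
  Set.Finite.toFinset (Set.toFinite (adjSet Λ))

/-- The rank-one operator `f ↦ ⟨f,h⟩·g`. -/
noncomputable def rankOne {N : ℕ} [NeZero N] (g h : ZMod N → ℂ) :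
    (ZMod N → ℂ) →ₗ[ℂ] (ZMod N → ℂ) where
  toFun f := inn f h • g
  map_add' f f' := by
    simp [inn, add_mul, Finset.sum_add_distrib, add_smul]
  map_smul' c f := by
    simp [inn, Finset.mul_sum, mul_assoc, mul_smul, smul_smul]

/-- The Gabor frame-type operator `S_{g,h,Λ} f = ∑_{λ∈Λ} ⟨f, π(λ)h⟩ · π(λ)g`. -/
noncomputable def gaborTypeOp (N : ℕ) [NeZero N] (Λ : AddSubgroup (ZMod N × ZMod N))
    (g h : ZMod N → ℂ) : (ZMod N → ℂ) →ₗ[ℂ] (ZMod N → ℂ) :=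
  ∑ lam ∈ subFinset Λ, rankOne (tfShift N lam.1 lam.2 g) (tfShift N lam.1 lam.2 h)


section Janssen

/-- The additive character `a ↦ e^{2πi a.val/N}`. -/
noncomputable def EE (N : ℕ) (a : ZMod N) : ℂ :=
  Complex.exp (2 * Real.pi * Complex.I * ((a.val : ℂ) / (N : ℂ)))

variable {N : ℕ} [NeZero N]

omit [NeZero N] in
lemma EE_eq_pow (a : ZMod N) :
    EE N a = Complex.exp (2 * Real.pi * Complex.I / (N : ℂ)) ^ a.val := by
  rw [← Complex.exp_nat_mul, EE]
  ring_nf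

lemma zeta_pow_N : Complex.exp (2 * Real.pi * Complex.I / (N : ℂ)) ^ N = 1 := by
  rw [← Complex.exp_nat_mul]
  have hN : (N : ℂ) ≠ 0 := Nat.cast_ne_zero.mpr (NeZero.ne N)
  rw [show (N : ℂ) * (2 * Real.pi * Complex.I / (N : ℂ)) = 2 * Real.pi * Complex.I by
    field_simp]
  exact Complex.exp_two_pi_mul_I

lemma zeta_pow_mod (x : ℕ) :
    Complex.exp (2 * Real.pi * Complex.I / (N : ℂ)) ^ (x % N)
      = Complex.exp (2 * Real.pi * Complex.I / (N : ℂ)) ^ x := by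
  conv_rhs => rw [← Nat.div_add_mod x N]
  rw [pow_add, pow_mul, zeta_pow_N, one_pow, one_mul]

omit [NeZero N] in
lemma EE_zero : EE N 0 = 1 := by simp [EE]

lemma EE_add (a b : ZMod N) : EE N (a + b) = EE N a * EE N b := by
  rw [EE_eq_pow, EE_eq_pow, EE_eq_pow, ← pow_add, ZMod.val_add, zeta_pow_mod]

lemma EE_eq_one_iff {a : ZMod N} : EE N a = 1 ↔ a = 0 := by
  constructor
  · intro h
    rw [EE, Complex.exp_eq_one_iff] at h
    obtain ⟨n, hn⟩ := h
    have h2 : (2 * Real.pi * Complex.I : ℂ) ≠ 0 := by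
      simp [Real.pi_ne_zero, Complex.I_ne_zero]
    rw [mul_comm (n:ℂ)] at hn
    have hn' : ((a.val : ℂ) / (N : ℂ)) = n := mul_left_cancel₀ h2 hn
    have hNc : (N : ℂ) ≠ 0 := Nat.cast_ne_zero.mpr (NeZero.ne N)
    have hv : ((a.val : ℂ)) = (n : ℂ) * N := (div_eq_iff hNc).mp hn'
    have hvz : (a.val : ℤ) = n * N := by exact_mod_cast hv
    have hlt : (a.val : ℤ) < N := by exact_mod_cast a.val_lt
    have hge : (0:ℤ) ≤ (a.val : ℤ) := Int.natCast_nonneg _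
    have hNpos : (0:ℤ) < N := by exact_mod_cast Nat.pos_of_ne_zero (NeZero.ne N)
    have hn0 : n = 0 := by nlinarith
    have hval : a.val = 0 := by subst hn0; omega
    exact (ZMod.val_eq_zero a).mp hval
  · rintro rfl; exact EE_zero

omit [NeZero N] in
lemma EE_ne_zero (a : ZMod N) : EE N a ≠ 0 := Complex.exp_ne_zero _

lemma EE_conj (a : ZMod N) : (starRingEnd ℂ) (EE N a) = EE N (-a) := by
  have h1 : EE N a * EE N (-a) = 1 := by
    rw [← EE_add, add_neg_cancel, EE_zero]
  have h2 : EE N a * (starRingEnd ℂ) (EE N a) = 1 := by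
    have hc : (starRingEnd ℂ) (2 * (Real.pi:ℂ) * Complex.I * ((a.val:ℂ) / (N:ℂ)))
        = -(2 * (Real.pi:ℂ) * Complex.I * ((a.val:ℂ) / (N:ℂ))) := by
      simp only [map_mul, map_div₀, Complex.conj_I, Complex.conj_ofReal, map_natCast,
        map_ofNat]
      ring
    rw [EE, ← Complex.exp_conj, hc, ← Complex.exp_add, add_neg_cancel, Complex.exp_zero]
  exact mul_left_cancel₀ (EE_ne_zero a) (h2.trans h1.symm)

lemma sum_EE (a : ZMod N) : ∑ x : ZMod N, EE N (a * x) = if a = 0 then (N:ℂ) else 0 := by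
  split_ifs with ha
  · subst ha
    simp [EE_zero, Finset.card_univ, ZMod.card]
  · have hE : EE N a ≠ 1 := fun hh => ha (EE_eq_one_iff.mp hh)
    have key : (∑ x : ZMod N, EE N (a * x)) * EE N a = ∑ x : ZMod N, EE N (a * x) := by
      rw [Finset.sum_mul]
      calc ∑ x : ZMod N, EE N (a * x) * EE N a
          = ∑ x : ZMod N, EE N (a * (x + 1)) := by
            refine Finset.sum_congr rfl fun x _ => ?_
            rw [← EE_add]; congr 1; ring
        _ = ∑ x : ZMod N, EE N (a * x) :=
            Fintype.sum_equiv (Equiv.addRight 1) _ _ (fun x => rfl)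
    by_contra hS
    exact hE (mul_left_cancel₀ hS (by rw [key, mul_one]))

lemma mem_subFinset {Λ : AddSubgroup (ZMod N × ZMod N)} {q : ZMod N × ZMod N} :
    q ∈ subFinset Λ ↔ q ∈ Λ := by
  simp [subFinset, Set.Finite.mem_toFinset]

lemma mem_adjFinset {Λ : AddSubgroup (ZMod N × ZMod N)} {p : ZMod N × ZMod N} :
    p ∈ adjFinset Λ ↔ ∀ q ∈ Λ, q.1 * p.2 - p.1 * q.2 = 0 := by
  simp [adjFinset, Set.Finite.mem_toFinset, adjSet, Set.mem_setOf_eq]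

lemma sum_char (Λ : AddSubgroup (ZMod N × ZMod N)) (μ : ZMod N × ZMod N) :
    ∑ q ∈ subFinset Λ, EE N (q.1 * μ.2 - μ.1 * q.2)
      = if μ ∈ adjFinset Λ then ((subFinset Λ).card : ℂ) else 0 := by
  split_ifs with hμ
  · have hall := mem_adjFinset.mp hμ
    calc ∑ q ∈ subFinset Λ, EE N (q.1 * μ.2 - μ.1 * q.2)
        = ∑ q ∈ subFinset Λ, 1 := by
          refine Finset.sum_congr rfl fun q hq => ?_
          rw [hall q (mem_subFinset.mp hq), EE_zero]
      _ = ((subFinset Λ).card : ℂ) := by simp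
  · have hμ' : ¬ (∀ q ∈ Λ, q.1 * μ.2 - μ.1 * q.2 = 0) := fun hall => hμ (mem_adjFinset.mpr hall)
    push_neg at hμ'
    obtain ⟨q0, hq0Λ, hq0⟩ := hμ'
    have hE : EE N (q0.1 * μ.2 - μ.1 * q0.2) ≠ 1 := fun hh => hq0 (EE_eq_one_iff.mp hh)
    have key : (∑ q ∈ subFinset Λ, EE N (q.1 * μ.2 - μ.1 * q.2)) * EE N (q0.1 * μ.2 - μ.1 * q0.2)
        = ∑ q ∈ subFinset Λ, EE N (q.1 * μ.2 - μ.1 * q.2) := by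
      rw [Finset.sum_mul]
      refine Finset.sum_nbij' (fun q => q + q0) (fun q => q - q0) ?_ ?_ ?_ ?_ ?_
      · intro q hq
        exact mem_subFinset.mpr (Λ.add_mem (mem_subFinset.mp hq) hq0Λ)
      · intro q hq
        exact mem_subFinset.mpr (Λ.sub_mem (mem_subFinset.mp hq) hq0Λ)
      · intro q _; simp
      · intro q _; simp
      · intro q _
        rw [← EE_add]
        congr 1
        simp only [Prod.fst_add, Prod.snd_add]
        ring
    by_contra hS
    exact hE (mul_left_cancel₀ hS (by rw [key, mul_one]))

omit [NeZero N] in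
lemma tfShift_apply (k r : ZMod N) (f : ZMod N → ℂ) (j : ZMod N) :
    tfShift N k r f j = EE N (r * j) * f (j - k) := rfl

lemma rankOne_apply (g h f : ZMod N → ℂ) : rankOne (N := N) g h f = inn f h • g := rfl

/-- The key scalar identity behind the Janssen representation. -/
lemma janssen_scalar (Λ : AddSubgroup (ZMod N × ZMod N)) (g h f : ZMod N → ℂ) (j : ZMod N) :
    ∑ lam ∈ subFinset Λ,
        (∑ m, f m * (starRingEnd ℂ) (EE N (lam.2 * m) * h (m - lam.1)))
          * (EE N (lam.2 * j) * g (j - lam.1))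
      = (((subFinset Λ).card : ℂ) / (N : ℂ)) *
          ∑ mu ∈ adjFinset Λ,
            (∑ t, g t * (starRingEnd ℂ) (EE N (mu.2 * t) * h (t - mu.1)))
              * (EE N (mu.2 * j) * f (j - mu.1)) := by
  classical
  set LF := subFinset Λ with hLF
  -- the common middle expression
  set X : (ZMod N × ZMod N) → ZMod N → ℂ := fun q a =>
    EE N (-(a * q.2)) * (g (q.1 + j) * (starRingEnd ℂ) (h (q.1 + j - a)) * f (j - a)) with hX
  set W : (ZMod N × ZMod N) → ℂ := fun mu =>
    (∑ t, g t * (starRingEnd ℂ) (EE N (mu.2 * t) * h (t - mu.1)))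
      * (EE N (mu.2 * j) * f (j - mu.1)) with hW
  have hN : (N : ℂ) ≠ 0 := Nat.cast_ne_zero.mpr (NeZero.ne N)
  -- Part A : LHS = ∑ q ∈ LF, ∑ a, X q a
  have partA : ∑ lam ∈ LF,
      (∑ m, f m * (starRingEnd ℂ) (EE N (lam.2 * m) * h (m - lam.1)))
        * (EE N (lam.2 * j) * g (j - lam.1))
      = ∑ q ∈ LF, ∑ a, X q a := by
    refine Finset.sum_nbij' (fun q => -q) (fun q => -q) ?_ ?_ ?_ ?_ ?_
    · intro q hq; exact mem_subFinset.mpr (Λ.neg_mem (mem_subFinset.mp hq))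
    · intro q hq; exact mem_subFinset.mpr (Λ.neg_mem (mem_subFinset.mp hq))
    · intro q _; simp
    · intro q _; simp
    · intro q _
      rw [Finset.sum_mul]
      calc ∑ m, f m * (starRingEnd ℂ) (EE N (q.2 * m) * h (m - q.1))
              * (EE N (q.2 * j) * g (j - q.1))
          = ∑ a, f (j - a) * (starRingEnd ℂ) (EE N (q.2 * (j - a)) * h ((j - a) - q.1))
              * (EE N (q.2 * j) * g (j - q.1)) :=
            (Fintype.sum_equiv (Equiv.subLeft j) _ _ (fun a => by
              simp only [Equiv.subLeft_apply])).symm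
        _ = ∑ a, X (-q) a := by
            refine Finset.sum_congr rfl fun a _ => ?_
            simp only [hX, Prod.fst_neg, Prod.snd_neg]
            rw [map_mul, EE_conj]
            have e1 : EE N (-(q.2 * (j - a))) * EE N (q.2 * j) = EE N (-(a * -q.2)) := by
              rw [← EE_add]; congr 1; ring
            have e2 : (j - a) - q.1 = -q.1 + j - a := by ring
            have e3 : j - q.1 = -q.1 + j := by ring
            rw [e2, e3]
            linear_combination
              (f (j - a) * (starRingEnd ℂ) (h (-q.1 + j - a)) * g (-q.1 + j)) * e1
  -- Part B : RHS = ∑ q ∈ LF, ∑ a, X q a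
  have inner : ∀ q : ZMod N × ZMod N,
      ∑ mu : ZMod N × ZMod N, EE N (q.1 * mu.2 - mu.1 * q.2) * W mu
        = (∑ a, X q a) * (N : ℂ) := by
    intro q
    rw [Fintype.sum_prod_type]
    have perA : ∀ a : ZMod N,
        ∑ b : ZMod N, EE N (q.1 * b - a * q.2) * W (a, b) = X q a * (N : ℂ) := by
      intro a
      calc ∑ b : ZMod N, EE N (q.1 * b - a * q.2)
              * ((∑ t, g t * (starRingEnd ℂ) (EE N (b * t) * h (t - a)))
                * (EE N (b * j) * f (j - a)))
          = ∑ b : ZMod N, ∑ t : ZMod N,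
              EE N (-(a * q.2)) * (g t * (starRingEnd ℂ) (h (t - a)) * f (j - a))
                * EE N ((q.1 + j - t) * b) := by
            refine Finset.sum_congr rfl fun b _ => ?_
            rw [Finset.sum_mul, Finset.mul_sum]
            refine Finset.sum_congr rfl fun t _ => ?_
            rw [map_mul, EE_conj]
            have e1 : EE N (q.1 * b - a * q.2) * (EE N (-(b * t)) * EE N (b * j))
                = EE N (-(a * q.2)) * EE N ((q.1 + j - t) * b) := by
              rw [← EE_add, ← EE_add, ← EE_add]; congr 1; ring
            linear_combination (g t * (starRingEnd ℂ) (h (t - a)) * f (j - a)) * e1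
        _ = ∑ t : ZMod N, ∑ b : ZMod N,
              EE N (-(a * q.2)) * (g t * (starRingEnd ℂ) (h (t - a)) * f (j - a))
                * EE N ((q.1 + j - t) * b) := Finset.sum_comm
        _ = ∑ t : ZMod N,
              EE N (-(a * q.2)) * (g t * (starRingEnd ℂ) (h (t - a)) * f (j - a))
                * (if q.1 + j - t = 0 then (N : ℂ) else 0) := by
            refine Finset.sum_congr rfl fun t _ => ?_
            rw [← Finset.mul_sum, sum_EE]
        _ = X q a * (N : ℂ) := by
            simp only [sub_eq_zero, mul_ite, mul_zero]
            rw [Fintype.sum_ite_eq (q.1 + j)]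
    calc ∑ a : ZMod N, ∑ b : ZMod N, EE N (q.1 * b - a * q.2) * W (a, b)
        = ∑ a : ZMod N, X q a * (N : ℂ) := Finset.sum_congr rfl fun a _ => perA a
      _ = (∑ a, X q a) * (N : ℂ) := by rw [Finset.sum_mul]
  have step1 : ∑ mu : ZMod N × ZMod N,
        (∑ q ∈ LF, EE N (q.1 * mu.2 - mu.1 * q.2)) * W mu
      = (LF.card : ℂ) * ∑ mu ∈ adjFinset Λ, W mu := by
    calc ∑ mu : ZMod N × ZMod N, (∑ q ∈ LF, EE N (q.1 * mu.2 - mu.1 * q.2)) * W mu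
        = ∑ mu : ZMod N × ZMod N,
            (if mu ∈ adjFinset Λ then ((LF.card : ℂ)) else 0) * W mu := by
          refine Finset.sum_congr rfl fun mu _ => ?_
          rw [sum_char]
      _ = ∑ mu : ZMod N × ZMod N,
            (if mu ∈ adjFinset Λ then (LF.card : ℂ) * W mu else 0) := by
          simp only [ite_mul, zero_mul]
      _ = ∑ mu ∈ adjFinset Λ, (LF.card : ℂ) * W mu := by
          rw [Finset.sum_ite_mem, Finset.univ_inter]
      _ = (LF.card : ℂ) * ∑ mu ∈ adjFinset Λ, W mu := by rw [Finset.mul_sum]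
  have step2 : ∑ mu : ZMod N × ZMod N,
        (∑ q ∈ LF, EE N (q.1 * mu.2 - mu.1 * q.2)) * W mu
      = (N : ℂ) * ∑ q ∈ LF, ∑ a, X q a := by
    calc ∑ mu : ZMod N × ZMod N, (∑ q ∈ LF, EE N (q.1 * mu.2 - mu.1 * q.2)) * W mu
        = ∑ mu : ZMod N × ZMod N, ∑ q ∈ LF, EE N (q.1 * mu.2 - mu.1 * q.2) * W mu := by
          simp only [Finset.sum_mul]
      _ = ∑ q ∈ LF, ∑ mu : ZMod N × ZMod N, EE N (q.1 * mu.2 - mu.1 * q.2) * W mu :=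
          Finset.sum_comm
      _ = ∑ q ∈ LF, (∑ a, X q a) * (N : ℂ) := Finset.sum_congr rfl fun q _ => inner q
      _ = (N : ℂ) * ∑ q ∈ LF, ∑ a, X q a := by rw [← Finset.sum_mul]; ring
  have comb : (LF.card : ℂ) * ∑ mu ∈ adjFinset Λ, W mu
      = (N : ℂ) * ∑ q ∈ LF, ∑ a, X q a := step1.symm.trans step2
  have partB : ((LF.card : ℂ) / (N : ℂ)) * ∑ mu ∈ adjFinset Λ, W mu
      = ∑ q ∈ LF, ∑ a, X q a := by
    calc ((LF.card : ℂ) / (N : ℂ)) * ∑ mu ∈ adjFinset Λ, W mu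
        = ((LF.card : ℂ) * ∑ mu ∈ adjFinset Λ, W mu) / (N : ℂ) := by ring
      _ = ((N : ℂ) * ∑ q ∈ LF, ∑ a, X q a) / (N : ℂ) := by rw [comb]
      _ = ∑ q ∈ LF, ∑ a, X q a := by field_simp
  exact partA.trans partB.symm

/-- Janssen representation for the frame-type operator, one-sided version. -/
lemma janssen_aux (N : ℕ) [NeZero N] (Λ : AddSubgroup (ZMod N × ZMod N)) (g h : ZMod N → ℂ) :
    gaborTypeOp N Λ g h
        = (((subFinset Λ).card : ℂ) / (N : ℂ)) •
            ∑ mu ∈ adjFinset Λ, inn g (tfShift N mu.1 mu.2 h) • tfShift N mu.1 mu.2 := by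
  apply LinearMap.ext; intro f
  funext j
  have LHSeq : gaborTypeOp N Λ g h f j
      = ∑ lam ∈ subFinset Λ,
          (∑ m, f m * (starRingEnd ℂ) (EE N (lam.2 * m) * h (m - lam.1)))
            * (EE N (lam.2 * j) * g (j - lam.1)) := by
    simp only [gaborTypeOp, LinearMap.coe_sum, Finset.sum_apply, rankOne_apply,
      Pi.smul_apply, smul_eq_mul, tfShift_apply, inn]
  have RHSeq : ((((subFinset Λ).card : ℂ) / (N : ℂ)) •
        ∑ mu ∈ adjFinset Λ, inn g (tfShift N mu.1 mu.2 h) • tfShift N mu.1 mu.2) f j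
      = (((subFinset Λ).card : ℂ) / (N : ℂ)) *
          ∑ mu ∈ adjFinset Λ,
            (∑ t, g t * (starRingEnd ℂ) (EE N (mu.2 * t) * h (t - mu.1)))
              * (EE N (mu.2 * j) * f (j - mu.1)) := by
    simp only [LinearMap.smul_apply, LinearMap.coe_sum, Finset.sum_apply, Pi.smul_apply,
      smul_eq_mul, tfShift_apply, inn, Finset.mul_sum]
  rw [LHSeq, RHSeq]
  exact janssen_scalar Λ g h f j

end Janssen

/-- **Janssen representation**: for every subgroup `Λ` of `ZMod N × ZMod N` and all
`g, h ∈ ℂ^N`, `S_{g,h,Λ} = (|Λ|/N) · ∑_{μ∈Λ°} ⟨g, π(μ)h⟩ · π(μ)`; in particular the Gabor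
frame operator satisfies `S_{g,Λ} = (|Λ|/N) · ∑_{μ∈Λ°} ⟨g, π(μ)g⟩ · π(μ)`. -/
theorem janssen_representation (N : ℕ) [NeZero N]
    (Λ : AddSubgroup (ZMod N × ZMod N)) (g h : ZMod N → ℂ) :
    gaborTypeOp N Λ g h
        = (((subFinset Λ).card : ℂ) / (N : ℂ)) •
            ∑ mu ∈ adjFinset Λ, inn g (tfShift N mu.1 mu.2 h) • tfShift N mu.1 mu.2 ∧
    gaborTypeOp N Λ g g
        = (((subFinset Λ).card : ℂ) / (N : ℂ)) •
            ∑ mu ∈ adjFinset Λ, inn g (tfShift N mu.1 mu.2 g) • tfShift N mu.1 mu.2 := by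
  exact ⟨janssen_aux N Λ g h, janssen_aux N Λ g g⟩
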